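/- arXiv:2512.07914 — 2 statements merged into one kernel-verified Lean document; each statement's English description precedes it below -/
import Mathlib

section
/- Let 0 < α < 1 and λ > 0. For every t > 0, the function t ↦ E_α(−λ t^α) is differentiable at t with derivative (d/dt) E_α(−λ t^α) = −λ t^{α−1} E_{α,α}(−λ t^α). -/
/-!
Since `Γ(αk + 1) ≥ ⌊αk⌋!` eventually dominates every geometric sequence, `E_{α,1}` is an entire
power series and may be differentiated termwise: `E_{α,1}' = E_{α,α} / α`, the factor `1/α` coming
from `(k + 1) / Γ(α(k + 1) + 1) = 1 / (α Γ(αk + α))`. The chain rule with `(s^α)' = α s^(α-1)`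
cancels it.
-/

open Real Set

/-- Two-parameter Mittag-Leffler function of a real argument; terms at poles of Γ
are interpreted as 0 (in Lean, division by Γ = 0 gives 0). -/
noncomputable def mittagLeffler (α σ x : ℝ) : ℝ :=
  ∑' k : ℕ, x ^ k / Real.Gamma (α * (k : ℝ) + σ)

open Filter

lemma Real.rpow_sub_one_div_exp_le_Gamma_add_one {A x : ℝ} (hA : 1 ≤ A) (hx : 1 ≤ x) :
    A ^ (x - 1) / exp A ≤ Gamma (x + 1) := by
  set n := ⌊x⌋₊
  have hn : (1 : ℝ) ≤ n := by exact_mod_cast (Nat.one_le_floor_iff x).mpr hx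
  calc A ^ (x - 1) / exp A ≤ A ^ n / exp A := by
        gcongr
        rw [← rpow_natCast]
        exact rpow_le_rpow_of_exponent_le hA (by linarith [Nat.lt_floor_add_one x])
    _ ≤ n.factorial := by
        rw [div_le_iff₀ (exp_pos A), ← div_le_iff₀' (by positivity)]
        exact pow_div_factorial_le_exp A (by linarith) n
    _ = Gamma (n + 1) := (Gamma_nat_eq_factorial n).symm
    _ ≤ Gamma (x + 1) :=
        Gamma_strictMonoOn_Ici.monotoneOn (by simp; linarith) (by simp; linarith)
          (by linarith [Nat.floor_le (by linarith : (0 : ℝ) ≤ x)])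

lemma summable_pow_div_Gamma_mul_add_one {α : ℝ} (hα : 0 < α) (r : ℝ) :
    Summable fun k : ℕ => r ^ k / Gamma (α * k + 1) := by
  -- `A ^ α ≥ 2 |r|` turns `Γ(αk + 1) ≥ A ^ (αk - 1) / e^A` into `|r|^k / Γ(αk + 1) ≤ A e^A / 2^k`.
  set A := max 1 ((2 * |r|) ^ α⁻¹)
  have hA : 1 ≤ A := le_max_left _ _
  have hAα : 2 * |r| ≤ A ^ α :=
    calc 2 * |r| = ((2 * |r|) ^ α⁻¹) ^ α := (rpow_inv_rpow (by positivity) hα.ne').symm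
      _ ≤ A ^ α := rpow_le_rpow (by positivity) (le_max_right _ _) hα.le
  refine summable_geometric_two.mul_left (A * exp A) |>.of_norm_bounded_eventually ?_
  filter_upwards [Nat.cofinite_eq_atTop ▸ eventually_ge_atTop ⌈α⁻¹⌉₊] with k hk
  have hαk : 1 ≤ α * k := by
    rw [← inv_le_iff_one_le_mul₀' hα]
    exact (Nat.le_ceil _).trans (by exact_mod_cast hk)
  have hΓ : 0 < Gamma (α * k + 1) := Gamma_pos_of_pos (by linarith)
  have hgeom : (2 * |r|) ^ k ≤ A * (exp A * Gamma (α * k + 1)) :=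
    calc (2 * |r|) ^ k ≤ (A ^ α) ^ k := pow_le_pow_left₀ (by positivity) hAα k
      _ = A * A ^ (α * k - 1) := by
          rw [← rpow_natCast, ← rpow_mul (by linarith), rpow_sub (by linarith), rpow_one]
          field_simp
      _ ≤ A * (exp A * Gamma (α * k + 1)) := by
          gcongr
          exact (div_le_iff₀' (exp_pos A)).1 (rpow_sub_one_div_exp_le_Gamma_add_one hA hαk)
  calc ‖r ^ k / Gamma (α * k + 1)‖ = (2 * |r|) ^ k / Gamma (α * k + 1) * (1 / 2) ^ k := by
        rw [norm_div, norm_pow, norm_eq_abs, norm_of_nonneg hΓ.le, mul_pow, mul_comm (2 ^ k),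
          mul_div_right_comm, mul_assoc, ← mul_pow]
        norm_num
    _ ≤ A * exp A * (1 / 2) ^ k := by
        gcongr
        rwa [div_le_iff₀ hΓ, mul_assoc]

theorem hasDerivAt_tsum_mul_pow {c : ℕ → ℝ} (hc : ∀ r, Summable fun k => c k * r ^ k) (x : ℝ) :
    HasDerivAt (fun y => ∑' k, c k * y ^ k) (∑' k, (k + 1) * c (k + 1) * x ^ k) x := by
  set R := |x| + 1
  have hR : 1 ≤ R := by simp [R]
  have hu : Summable fun k => |c k| * (2 * R) ^ k := by
    simpa [abs_mul, abs_of_pos (by linarith : 0 < 2 * R)] using (hc (2 * R)).abs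
  have hbound : ∀ k, ∀ y ∈ Metric.ball 0 R, ‖c k * (k * y ^ (k - 1))‖ ≤ |c k| * (2 * R) ^ k := by
    intro k y hy
    rw [mem_ball_zero_iff, norm_eq_abs] at hy
    rw [norm_mul, norm_mul, norm_pow, norm_eq_abs, norm_eq_abs, Nat.abs_cast, mul_pow]
    gcongr
    · exact_mod_cast (Nat.lt_two_pow_self).le
    · calc |y| ^ (k - 1) ≤ R ^ (k - 1) := pow_le_pow_left₀ (abs_nonneg y) hy.le _
        _ ≤ R ^ k := pow_le_pow_right₀ hR (Nat.sub_le k 1)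
  have hx : x ∈ Metric.ball 0 R := by simp [R]
  have hderiv := hasDerivAt_tsum_of_isPreconnected hu Metric.isOpen_ball
    (convex_ball 0 R).isPreconnected (fun k y _ => (hasDerivAt_pow k y).const_mul (c k))
    hbound hx (hc x) hx
  refine hderiv.congr_deriv ?_
  rw [(Summable.of_norm_bounded hu (hbound · x hx)).tsum_eq_zero_add]
  simp only [CharP.cast_eq_zero, zero_mul, mul_zero, zero_add, Nat.cast_add, Nat.cast_one,
    add_tsub_cancel_right]
  exact tsum_congr fun k => by ring

lemma hasDerivAt_mittagLeffler_one {α : ℝ} (hα : 0 < α) (x : ℝ) :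
    HasDerivAt (mittagLeffler α 1) (mittagLeffler α α x / α) x := by
  have hc (r : ℝ) : Summable fun k : ℕ => (Gamma (α * k + 1))⁻¹ * r ^ k := by
    simpa only [div_eq_inv_mul] using summable_pow_div_Gamma_mul_add_one hα r
  have hcoef (k : ℕ) :
      ((k : ℝ) + 1) * (Gamma (α * (k + 1 : ℕ) + 1))⁻¹ * x ^ k = x ^ k / Gamma (α * k + α) / α := by
    have hk : 0 < α * k + α := by positivity
    rw [Nat.cast_succ, show α * (k + 1) = α * k + α by ring, Gamma_add_one hk.ne']
    field_simp [(Gamma_pos_of_pos hk).ne']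
  convert hasDerivAt_tsum_mul_pow hc x using 1
  · funext y
    simp only [mittagLeffler, div_eq_inv_mul]
  · rw [mittagLeffler, ← tsum_div_const]
    exact (tsum_congr hcoef).symm

theorem hasDerivAt_mittagLeffler_neg_general (α lam t : ℝ) (hα0 : 0 < α)
    (ht : 0 < t) :
    HasDerivAt (fun s : ℝ => mittagLeffler α 1 (-lam * s ^ α))
      (-lam * t ^ (α - 1) * mittagLeffler α α (-lam * t ^ α)) t := by
  have hinner : HasDerivAt (fun s : ℝ => -lam * s ^ α) (-lam * (α * t ^ (α - 1))) t :=
    (hasDerivAt_rpow_const (Or.inl ht.ne')).const_mul (-lam)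
  refine ((hasDerivAt_mittagLeffler_one hα0 _).comp t hinner).congr_deriv ?_
  field_simp

theorem hasDerivAt_mittagLeffler_neg (α lam t : ℝ) (hα0 : 0 < α) (hα1 : α < 1)
    (hlam : 0 < lam) (ht : 0 < t) :
    HasDerivAt (fun s : ℝ => mittagLeffler α 1 (-lam * s ^ α))
      (-lam * t ^ (α - 1) * mittagLeffler α α (-lam * t ^ α)) t :=
  hasDerivAt_mittagLeffler_neg_general α lam t hα0 ht
end

section
/- Let 0 < α < 1 and let κ ∈ ℝ with κ < 0 or κ > 1. Then there exists a constant C > 0 such that |E_α(−z) − κ|^{−1} ≤ C for all z ≥ 0. -/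
/-!
For `0 < α ≤ 1` the function `u t = E_α(-t^α)` solves the Volterra equation
`Γ(α) (1 - u t) = ∫₀ᵗ (t - s)^(α-1) u s ds`
(integrate the series termwise with the Beta integral). The kernel `(t - s)^(α-1)` is
nonincreasing in `t`, so once `u ≥ 0` on `[0, τ]`, the contribution of `[0, τ]` to `Γ(α) u r`
is nonnegative and nondecreasing in `r ≥ τ`, while the contribution of `[τ, r]` is at most
`Γ(α)/4 · max |u|` on a window whose length depends only on `α`. This rules out a sign change
in the window, so `u ≥ 0` by induction, and then `u ≤ 1` by the equation. Hence `E_α(-z)`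
stays in `[0, 1]`, at distance at least `min (-κ) (κ - 1)` from `κ`.
-/

open Real Set

open MeasureTheory Filter

theorem Gamma_add_one_le_Gamma_add_mul_rpow {α y : ℝ} (hα0 : 0 < α) (hα1 : α ≤ 1)
    (hy : 0 < y) :
    Gamma (y + 1) ≤ Gamma (y + α) * (y + α) ^ (1 - α) := by
  rcases hα1.lt_or_eq with hα1 | rfl
  · have hya : 0 < y + α := by positivity
    have hG := Gamma_pos_of_pos hya
    have h := Gamma_mul_add_mul_le_rpow_Gamma_mul_rpow_Gamma (s := y + α) (t := y + α + 1)
      hya (by positivity) hα0 (sub_pos.2 hα1) (add_sub_cancel α 1)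
    calc Gamma (y + 1) = Gamma (α * (y + α) + (1 - α) * (y + α + 1)) := by ring_nf
      _ ≤ Gamma (y + α) ^ α * ((y + α) * Gamma (y + α)) ^ (1 - α) := by
        rwa [← Gamma_add_one hya.ne']
      _ = Gamma (y + α) ^ (α + (1 - α)) * (y + α) ^ (1 - α) := by
        rw [mul_rpow hya.le hG.le, rpow_add hG]; ring
      _ = Gamma (y + α) * (y + α) ^ (1 - α) := by rw [add_sub_cancel, rpow_one]
  · simp

theorem Gamma_le_two_mul_Gamma_add_div_rpow {α y : ℝ} (hα0 : 0 < α) (hα1 : α ≤ 1)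
    (hy : 1 ≤ y) :
    Gamma y ≤ 2 * Gamma (y + α) / y ^ α := by
  have hy0 : 0 < y := by linarith
  have hGa := Gamma_pos_of_pos (by positivity : 0 < y + α)
  have hpow : (y + α) ^ (1 - α) ≤ 2 * y ^ (1 - α) :=
    calc (y + α) ^ (1 - α) ≤ (2 * y) ^ (1 - α) := by gcongr; linarith
      _ = 2 ^ (1 - α) * y ^ (1 - α) := mul_rpow (by norm_num) hy0.le
      _ ≤ 2 * y ^ (1 - α) := by
        gcongr
        exact rpow_le_self_of_one_le (by norm_num) (by linarith)
  have key : y * Gamma y ≤ 2 * Gamma (y + α) * y ^ (1 - α) := by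
    rw [← Gamma_add_one hy0.ne']
    calc _ ≤ _ := Gamma_add_one_le_Gamma_add_mul_rpow hα0 hα1 hy0
      _ ≤ _ := by nlinarith
  rw [rpow_sub hy0, rpow_one, mul_div_assoc', le_div_iff₀ (by positivity)] at key
  rw [le_div_iff₀ (by positivity)]
  nlinarith

theorem summable_pow_div_Gamma {α : ℝ} (hα0 : 0 < α) (hα1 : α ≤ 1) (x : ℝ) :
    Summable fun k : ℕ => x ^ k / Gamma (α * k + 1) := by
  refine summable_of_ratio_norm_eventually_le (r := 1 / 2) (by norm_num) ?_
  have hlim : Tendsto (fun k : ℕ => (α * k + 1) ^ α) atTop atTop :=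
    (tendsto_rpow_atTop hα0).comp <| tendsto_atTop_add_const_right _ _ <|
      tendsto_natCast_atTop_atTop.const_mul_atTop hα0
  filter_upwards [hlim.eventually_ge_atTop (4 * |x|)] with k hk
  have hy : 1 ≤ α * k + 1 := by nlinarith [(Nat.cast_nonneg k : (0 : ℝ) ≤ k)]
  have hG := Gamma_le_two_mul_Gamma_add_div_rpow hα0 hα1 hy
  have hG0 := Gamma_pos_of_pos (by linarith : (0 : ℝ) < α * k + 1)
  have hG1 := Gamma_pos_of_pos (by positivity : (0 : ℝ) < α * k + 1 + α)
  rw [Nat.cast_succ, show α * (k + 1 : ℝ) + 1 = α * k + 1 + α by ring, norm_div, norm_div,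
    norm_pow, norm_pow, pow_succ, Real.norm_of_nonneg hG0.le, Real.norm_of_nonneg hG1.le,
    div_le_iff₀ hG1, Real.norm_eq_abs]
  rw [le_div_iff₀ (by positivity)] at hG
  have hx : |x| * Gamma (α * k + 1) ≤ Gamma (α * k + 1 + α) / 2 := by nlinarith [abs_nonneg x]
  calc |x| ^ k * |x| = |x| ^ k * (|x| * Gamma (α * k + 1)) / Gamma (α * k + 1) := by
        field_simp
    _ ≤ |x| ^ k * (Gamma (α * k + 1 + α) / 2) / Gamma (α * k + 1) := by gcongr
    _ = 1 / 2 * (|x| ^ k / Gamma (α * k + 1)) * Gamma (α * k + 1 + α) := by ring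

theorem continuous_mittagLeffler {α : ℝ} (hα0 : 0 < α) (hα1 : α ≤ 1) :
    Continuous (mittagLeffler α 1) := by
  refine continuous_iff_continuousAt.2 fun x => ?_
  set R := |x| + 1
  have hR : ContinuousOn (mittagLeffler α 1) (Icc (-R) R) :=
    continuousOn_tsum (fun k => (continuous_pow k).continuousOn.div_const _)
      (summable_pow_div_Gamma hα0 hα1 R) fun k y hy => by
        rw [norm_div, norm_pow, Real.norm_eq_abs, Real.norm_of_nonneg
          (Gamma_pos_of_pos (by positivity)).le]
        gcongr
        exact abs_le.2 hy
  exact hR.continuousAt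
    (Icc_mem_nhds (by linarith [neg_abs_le x]) (by linarith [le_abs_self x]))

theorem hasSum_mittagLeffler_sub_one (α x : ℝ)
    (hs : Summable fun k : ℕ => x ^ k / Gamma (α * k + 1)) :
    HasSum (fun k : ℕ => x ^ (k + 1) / Gamma (α * (k + 1 : ℕ) + 1))
      (mittagLeffler α 1 x - 1) := by
  simpa [mittagLeffler] using (hasSum_nat_add_iff' 1).2 hs.hasSum

theorem intervalIntegrable_sub_rpow {α : ℝ} (hα0 : 0 < α) (t a b : ℝ) :
    IntervalIntegrable (fun s => (t - s) ^ (α - 1)) volume a b := by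
  simpa using (intervalIntegral.intervalIntegrable_rpow' (a := t - a) (b := t - b)
    (by linarith)).comp_sub_left t

theorem integral_sub_rpow_mul_rpow {a b t : ℝ} (ha : 0 < a) (hb : 0 < b) (ht : 0 < t) :
    ∫ s in 0..t, (t - s) ^ (a - 1) * s ^ (b - 1) =
      Gamma a * Gamma b / Gamma (a + b) * t ^ (a + b - 1) := by
  have h := Complex.betaIntegral_scaled b a ht
  rw [Complex.betaIntegral_eq_Gamma_mul_div _ _ (by simpa) (by simpa)] at h
  apply Complex.ofReal_injective
  rw [← intervalIntegral.integral_ofReal, intervalIntegral.integral_congr (g := fun s : ℝ =>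
    (s : ℂ) ^ ((b : ℂ) - 1) * ((t : ℂ) - s) ^ ((a : ℂ) - 1)) fun s hs => ?_, h]
  · rw [← Complex.ofReal_add, Complex.Gamma_ofReal, Complex.Gamma_ofReal, Complex.Gamma_ofReal,
      ← Complex.ofReal_one, ← Complex.ofReal_sub, ← Complex.ofReal_cpow ht.le, add_comm b a]
    push_cast
    ring
  · rw [uIcc_of_le ht.le] at hs
    rw [Complex.ofReal_mul, Complex.ofReal_cpow (sub_nonneg.2 hs.2), Complex.ofReal_cpow hs.1]
    push_cast
    ring

theorem integral_sub_rpow_mul_rpow_pow {α t : ℝ} (hα0 : 0 < α) (ht : 0 ≤ t) (k : ℕ) :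
    ∫ s in 0..t, (t - s) ^ (α - 1) * (s ^ α) ^ k =
      Gamma α * Gamma (α * k + 1) / Gamma (α * (k + 1 : ℕ) + 1) * (t ^ α) ^ (k + 1) := by
  rcases ht.eq_or_lt with rfl | ht
  · simp [zero_rpow hα0.ne']
  rw [intervalIntegral.integral_congr (g := fun s => (t - s) ^ (α - 1) * s ^ (α * k + 1 - 1))
    fun s hs => ?_, integral_sub_rpow_mul_rpow hα0 (by positivity) ht]
  · rw [← rpow_natCast, ← rpow_mul ht.le]
    push_cast
    ring_nf
  · rw [uIcc_of_le ht.le] at hs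
    dsimp only
    rw [add_sub_cancel_right, rpow_mul hs.1, rpow_natCast]

theorem integral_sub_rpow_mul_mittagLeffler {α t : ℝ} (hα0 : 0 < α) (hα1 : α ≤ 1)
    (ht : 0 ≤ t) :
    ∫ s in 0..t, (t - s) ^ (α - 1) * mittagLeffler α 1 (-s ^ α) =
      Gamma α * (1 - mittagLeffler α 1 (-t ^ α)) := by
  set F : ℕ → ℝ → ℝ := fun k s =>
    (t - s) ^ (α - 1) * ((-s ^ α) ^ k / Gamma (α * k + 1))
  set bound : ℕ → ℝ → ℝ := fun k s =>
    (t - s) ^ (α - 1) * ((s ^ α) ^ k / Gamma (α * k + 1))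
  have hF : HasSum (fun k => ∫ s in 0..t, F k s)
      (∫ s in 0..t, (t - s) ^ (α - 1) * mittagLeffler α 1 (-s ^ α)) := by
    refine intervalIntegral.hasSum_integral_of_dominated_convergence bound (fun k => ?_)
      (fun k => .of_forall fun s hs => ?_) (.of_forall fun s _ => ?_) ?_
      (.of_forall fun s _ => ?_)
    · refine (intervalIntegrable_iff.1 <|
        (intervalIntegrable_sub_rpow hα0 t 0 t).mul_continuousOn ?_).aestronglyMeasurable
      exact ((continuous_pow k).comp
        (continuous_rpow_const hα0.le).neg).continuousOn.div_const _
    · rw [uIoc_of_le ht] at hs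
      rw [norm_mul, norm_div, norm_pow, norm_neg, Real.norm_of_nonneg (rpow_nonneg hs.1.le _),
        Real.norm_of_nonneg (rpow_nonneg (sub_nonneg.2 hs.2) _),
        Real.norm_of_nonneg (Gamma_pos_of_pos (by positivity)).le]
    · exact (summable_pow_div_Gamma hα0 hα1 _).mul_left _
    · simp only [bound, tsum_mul_left]
      exact (intervalIntegrable_sub_rpow hα0 t 0 t).mul_continuousOn
        ((continuous_mittagLeffler hα0 hα1).comp (continuous_rpow_const hα0.le)).continuousOn
    · exact (summable_pow_div_Gamma hα0 hα1 _).hasSum.mul_left _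
  have hterm : ∀ k : ℕ, ∫ s in 0..t, F k s =
      -Gamma α * ((-t ^ α) ^ (k + 1) / Gamma (α * (k + 1 : ℕ) + 1)) := by
    intro k
    have hFk : F k = fun s =>
        (-1) ^ k / Gamma (α * k + 1) * ((t - s) ^ (α - 1) * (s ^ α) ^ k) := by
      ext s
      simp only [F, neg_pow (_ ^ α)]
      ring
    have := (Gamma_pos_of_pos (by positivity : 0 < α * k + 1)).ne'
    rw [hFk, intervalIntegral.integral_const_mul, integral_sub_rpow_mul_rpow_pow hα0 ht k,
      neg_pow (t ^ α)]
    field_simp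
    ring
  rw [funext hterm] at hF
  rw [hF.unique
    ((hasSum_mittagLeffler_sub_one α _ (summable_pow_div_Gamma hα0 hα1 _)).mul_left _)]
  ring

theorem integral_sub_rpow {α τ r : ℝ} (hα0 : 0 < α) :
    ∫ s in τ..r, (r - s) ^ (α - 1) = (r - τ) ^ α / α := by
  rw [intervalIntegral.integral_comp_sub_left (fun x => x ^ (α - 1)), sub_self,
    integral_rpow (.inl (by linarith)), sub_add_cancel, zero_rpow hα0.ne', sub_zero]

theorem abs_integral_sub_rpow_mul_le {α τ r M : ℝ} {u : ℝ → ℝ} (hα0 : 0 < α)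
    (hτr : τ ≤ r) (hu : ContinuousOn u (Icc τ r)) (hM : ∀ s ∈ Icc τ r, |u s| ≤ M) :
    |∫ s in τ..r, (r - s) ^ (α - 1) * u s| ≤ M * ((r - τ) ^ α / α) := by
  have hint := (intervalIntegrable_sub_rpow hα0 r τ r).mul_continuousOn (uIcc_of_le hτr ▸ hu)
  calc |∫ s in τ..r, (r - s) ^ (α - 1) * u s|
      ≤ ∫ s in τ..r, |(r - s) ^ (α - 1) * u s| :=
        intervalIntegral.abs_integral_le_integral_abs hτr
    _ ≤ ∫ s in τ..r, (r - s) ^ (α - 1) * M := by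
        refine intervalIntegral.integral_mono_on hτr hint.abs
          ((intervalIntegrable_sub_rpow hα0 r τ r).mul_const M) fun s hs => ?_
        have hk := rpow_nonneg (sub_nonneg.2 hs.2) (α - 1)
        rw [abs_mul, abs_of_nonneg hk]
        exact mul_le_mul_of_nonneg_left (hM s hs) hk
    _ = M * ((r - τ) ^ α / α) := by
        rw [intervalIntegral.integral_mul_const, integral_sub_rpow hα0, mul_comm]

/-- The integrated form of the Caputo fractional relaxation equation
`D^α u = -(Γ(α) / c) u`, `u 0 = 1`; for `c = Γ(α)` it is solved by `t ↦ E_α(-t^α)`. -/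
structure IsRelaxationSolution (α c : ℝ) (u : ℝ → ℝ) : Prop where
  continuousOn : ContinuousOn u (Ici 0)
  integral_eq : ∀ t, 0 ≤ t → ∫ s in 0..t, (t - s) ^ (α - 1) * u s = c * (1 - u t)

namespace IsRelaxationSolution

variable {α c : ℝ} {u : ℝ → ℝ}

theorem intervalIntegrable (hu : IsRelaxationSolution α c u) (hα0 : 0 < α) (t : ℝ) {a b : ℝ}
    (ha : 0 ≤ a) (hb : 0 ≤ b) :
    IntervalIntegrable (fun s => (t - s) ^ (α - 1) * u s) volume a b :=
  (intervalIntegrable_sub_rpow hα0 t a b).mul_continuousOn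
    (hu.continuousOn.mono fun _ hs => (le_min ha hb).trans hs.1)

theorem map_zero (hu : IsRelaxationSolution α c u) (hc : c ≠ 0) : u 0 = 1 := by
  have h := hu.integral_eq 0 le_rfl
  rw [intervalIntegral.integral_same, eq_comm, mul_eq_zero, sub_eq_zero] at h
  exact (h.resolve_left hc).symm

theorem mul_eq_sub (hu : IsRelaxationSolution α c u) (hα0 : 0 < α) {τ r : ℝ} (hτ : 0 ≤ τ)
    (hτr : τ ≤ r) :
    c * u r = (c - ∫ s in 0..τ, (r - s) ^ (α - 1) * u s) -
      ∫ s in τ..r, (r - s) ^ (α - 1) * u s := by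
  have h := hu.integral_eq r (hτ.trans hτr)
  rw [← intervalIntegral.integral_add_adjacent_intervals (hu.intervalIntegrable hα0 r le_rfl hτ)
    (hu.intervalIntegrable hα0 r hτ (hτ.trans hτr))] at h
  linarith

theorem integral_anti (hu : IsRelaxationSolution α c u) (hα0 : 0 < α) (hα1 : α ≤ 1)
    {τ r r' : ℝ} (hτ : 0 ≤ τ) (hnn : ∀ s ∈ Icc 0 τ, 0 ≤ u s) (hτr : τ ≤ r)
    (hrr' : r ≤ r') :
    ∫ s in 0..τ, (r' - s) ^ (α - 1) * u s ≤ ∫ s in 0..τ, (r - s) ^ (α - 1) * u s :=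
  intervalIntegral.integral_mono_on_of_le_Ioo hτ (hu.intervalIntegrable hα0 r' le_rfl hτ)
    (hu.intervalIntegrable hα0 r le_rfl hτ) fun s hs =>
      mul_le_mul_of_nonneg_right (rpow_le_rpow_of_nonpos (by linarith [hs.2]) (by linarith)
        (by linarith)) (hnn s (Ioo_subset_Icc_self hs))

theorem nonneg_Icc_add (hu : IsRelaxationSolution α c u) (hα0 : 0 < α) (hα1 : α ≤ 1)
    (hc : 0 < c) {τ : ℝ} (hτ : 0 ≤ τ) (hnn : ∀ s ∈ Icc 0 τ, 0 ≤ u s) :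
    ∀ s ∈ Icc 0 (τ + (α * c / 4) ^ α⁻¹), 0 ≤ u s := by
  set W := (α * c / 4) ^ α⁻¹
  have hW : W ^ α / α = c / 4 := by
    rw [rpow_inv_rpow (by positivity) hα0.ne']
    field_simp
  set Q : ℝ → ℝ := fun r => c - ∫ s in 0..τ, (r - s) ^ (α - 1) * u s
  have hQ : ∀ r r', τ ≤ r → r ≤ r' → Q r ≤ Q r' := fun r r' hr hrr' =>
    sub_le_sub_left (hu.integral_anti hα0 hα1 hτ hnn hr hrr') c
  have hQτ : 0 ≤ Q τ := by
    simp only [Q, hu.integral_eq τ hτ]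
    linarith [mul_nonneg hc.le (hnn τ ⟨hτ, le_rfl⟩)]
  intro t ⟨ht0, ht⟩
  rcases le_or_gt t τ with htτ | hτt
  · exact hnn t ⟨ht0, htτ⟩
  by_contra! hneg
  obtain ⟨m, hm, hmax⟩ := isCompact_Icc.exists_isMaxOn (nonempty_Icc.2 hτt.le)
    (hu.continuousOn.mono fun s hs => hτ.trans hs.1).abs
  have hI : ∀ r ∈ Icc τ t, |∫ s in τ..r, (r - s) ^ (α - 1) * u s| ≤ |u m| * (c / 4) :=
    fun r hr => (abs_integral_sub_rpow_mul_le hα0 hr.1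
      (hu.continuousOn.mono fun s hs => hτ.trans hs.1)
      fun s hs => hmax ⟨hs.1, hs.2.trans hr.2⟩).trans
        (by rw [← hW]; gcongr <;> linarith [hr.1, hr.2])
  have hmax_le : c * |u m| ≤ Q t + |u m| * (c / 4) := by
    rw [← abs_of_pos hc, ← abs_mul, hu.mul_eq_sub hα0 hτ hm.1, abs_of_pos hc]
    calc _ ≤ |Q m| + _ := abs_sub _ _
      _ ≤ Q t + |u m| * (c / 4) := by
        rw [abs_of_nonneg (hQτ.trans (hQ τ m le_rfl hm.1))]
        exact add_le_add (hQ m t hm.1 hm.2) (hI m hm)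
  have ht_ge : Q t - |u m| * (c / 4) ≤ c * u t := by
    rw [hu.mul_eq_sub hα0 hτ hτt.le]
    linarith [le_abs_self (∫ s in τ..t, (t - s) ^ (α - 1) * u s), hI t ⟨hτt.le, le_rfl⟩]
  -- `hmax_le` gives `c |u m| / 4 ≤ Q t / 3`, hence `c u t ≥ 2 Q t / 3 ≥ 0`.
  linarith [mul_neg_of_pos_of_neg hc hneg, hQτ.trans (hQ τ t le_rfl hτt.le)]

theorem nonneg (hu : IsRelaxationSolution α c u) (hα0 : 0 < α) (hα1 : α ≤ 1) (hc : 0 < c)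
    {t : ℝ} (ht : 0 ≤ t) : 0 ≤ u t := by
  have hW : 0 < (α * c / 4) ^ α⁻¹ := by positivity
  have hn : ∀ n : ℕ, ∀ s ∈ Icc 0 (n * (α * c / 4) ^ α⁻¹), 0 ≤ u s := by
    intro n
    induction n with
    | zero =>
      intro s hs
      rw [Nat.cast_zero, zero_mul, Icc_self, mem_singleton_iff] at hs
      rw [hs, hu.map_zero hc.ne']
      exact zero_le_one
    | succ n ih =>
      rw [Nat.cast_succ, add_one_mul]
      exact hu.nonneg_Icc_add hα0 hα1 hc (by positivity) ih
  obtain ⟨n, hn'⟩ := exists_nat_ge (t / (α * c / 4) ^ α⁻¹)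
  exact hn n t ⟨ht, (div_le_iff₀ hW).1 hn'⟩

theorem mem_Icc (hu : IsRelaxationSolution α c u) (hα0 : 0 < α) (hα1 : α ≤ 1) (hc : 0 < c)
    {t : ℝ} (ht : 0 ≤ t) : u t ∈ Icc 0 1 := by
  refine ⟨hu.nonneg hα0 hα1 hc ht, ?_⟩
  have h : 0 ≤ c * (1 - u t) := by
    rw [← hu.integral_eq t ht]
    exact intervalIntegral.integral_nonneg ht fun s hs =>
      mul_nonneg (rpow_nonneg (sub_nonneg.2 hs.2) _) (hu.nonneg hα0 hα1 hc hs.1)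
  exact sub_nonneg.1 ((mul_nonneg_iff_of_pos_left hc).1 h)

end IsRelaxationSolution

theorem isRelaxationSolution_mittagLeffler {α : ℝ} (hα0 : 0 < α) (hα1 : α ≤ 1) :
    IsRelaxationSolution α (Gamma α) fun t => mittagLeffler α 1 (-t ^ α) where
  continuousOn :=
    ((continuous_mittagLeffler hα0 hα1).comp (continuous_rpow_const hα0.le).neg).continuousOn
  integral_eq _ ht := integral_sub_rpow_mul_mittagLeffler hα0 hα1 ht

theorem mittagLeffler_sub_kappa_inv_bounded (α κ : ℝ) (hα0 : 0 < α) (hα1 : α < 1)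
    (hκ : κ < 0 ∨ 1 < κ) :
    ∃ C > (0:ℝ), ∀ z : ℝ, 0 ≤ z → |mittagLeffler α 1 (-z) - κ|⁻¹ ≤ C := by
  have hE : ∀ z, 0 ≤ z → mittagLeffler α 1 (-z) ∈ Icc 0 1 := fun z hz => by
    simpa only [rpow_inv_rpow hz hα0.ne'] using
      (isRelaxationSolution_mittagLeffler hα0 hα1.le).mem_Icc hα0 hα1.le
        (Gamma_pos_of_pos hα0) (rpow_nonneg hz α⁻¹)
  rcases hκ with hκ | hκ
  · refine ⟨(-κ)⁻¹, by simpa, fun z hz => inv_anti₀ (by linarith) ?_⟩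
    rw [abs_of_nonneg (by linarith [(hE z hz).1])]
    linarith [(hE z hz).1]
  · refine ⟨(κ - 1)⁻¹, by simpa, fun z hz => inv_anti₀ (by linarith) ?_⟩
    rw [abs_of_nonpos (by linarith [(hE z hz).2])]
    linarith [(hE z hz).2]
end
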